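/- If V is a multiplicative unitary on a finite-dimensional Hilbert space H (i.e. V_{12}V_{13}V_{23} = V_{23}V_{12}), then the dimension of the space of fixed vectors of V equals the dimension of the space of cofixed vectors of V. -/

import Mathlib

/-!
Let `n = dim H` and `A = (id ⊗ Tr)(V)`. A vector `ξ` is fixed iff `A ξ = n ξ`: in that case
`∑_y ⟪ξ ⊗ e_y, V (ξ ⊗ e_y)⟫ = n ‖ξ‖²`, while each term has real part at most `‖ξ‖²` because `V`
is unitary, which forces `V (ξ ⊗ e_y) = ξ ⊗ e_y` for every basis vector `e_y`. Writing the
pentagon equation as `V₁₂ V₁₃ = V₂₃ V₁₂ V₂₃*` and tracing out legs 2 and 3 gives `A² = n A`, so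
`A / n` is an idempotent whose range is the space of fixed vectors, and that space has dimension
`Tr (A / n) = Tr (V) / n`. The cofixed vectors of `V` are the fixed vectors of the dual
multiplicative unitary `Σ V* Σ`, whose trace is the complex conjugate of `Tr V`; since `Tr V / n`
is a natural number, the two dimensions agree.
-/

open scoped InnerProductSpace ComplexOrder

noncomputable section

namespace MU

variable {ι : Type*} [Fintype ι] [DecidableEq ι]

/-- The elementary tensor `f ⊗ g` of two vectors, in the model
`H ⊗ H = EuclideanSpace ℂ (ι × ι)`. -/
def tens (f g : EuclideanSpace ℂ ι) : EuclideanSpace ℂ (ι × ι) :=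
  WithLp.toLp 2 (fun p : ι × ι => f p.1 * g p.2)

/-- `g ↦ f ⊗ g` as a linear map. -/
def tensL (f : EuclideanSpace ℂ ι) :
    EuclideanSpace ℂ ι →ₗ[ℂ] EuclideanSpace ℂ (ι × ι) where
  toFun g := tens f g
  map_add' x y := by
    ext p; simp only [tens, PiLp.add_apply]; ring
  map_smul' c x := by
    ext p; simp only [tens, PiLp.smul_apply, smul_eq_mul, RingHom.id_apply]; ring

/-- `f ↦ f ⊗ g` as a linear map. -/
def tensR (g : EuclideanSpace ℂ ι) :
    EuclideanSpace ℂ ι →ₗ[ℂ] EuclideanSpace ℂ (ι × ι) where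
  toFun f := tens f g
  map_add' x y := by
    ext p; simp only [tens, PiLp.add_apply]; ring
  map_smul' c x := by
    ext p; simp only [tens, PiLp.smul_apply, smul_eq_mul, RingHom.id_apply]; ring

/-- Action of a matrix on a Euclidean space vector. -/
def appM {κ : Type*} [Fintype κ] (M : Matrix κ κ ℂ) (v : EuclideanSpace ℂ κ) :
    EuclideanSpace ℂ κ :=
  WithLp.toLp 2 (fun i => ∑ j, M i j * v j)

/-- Action of a matrix as a linear map on the Euclidean space. -/
def mact {κ : Type*} [Fintype κ] (M : Matrix κ κ ℂ) :
    EuclideanSpace ℂ κ →ₗ[ℂ] EuclideanSpace ℂ κ where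
  toFun := appM M
  map_add' x y := by
    ext i; simp only [appM, PiLp.add_apply, mul_add, Finset.sum_add_distrib]
  map_smul' c x := by
    ext i; simp only [appM, PiLp.smul_apply, smul_eq_mul, RingHom.id_apply, Finset.mul_sum]
    refine Finset.sum_congr rfl fun j _ => ?_
    ring

/-- The leg `V₁₂` on `H ⊗ H ⊗ H`. -/
def leg12 (V : Matrix (ι × ι) (ι × ι) ℂ) : Matrix (ι × ι × ι) (ι × ι × ι) ℂ :=
  fun p q => V (p.1, p.2.1) (q.1, q.2.1) * (if p.2.2 = q.2.2 then 1 else 0)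

/-- The leg `V₁₃` on `H ⊗ H ⊗ H`. -/
def leg13 (V : Matrix (ι × ι) (ι × ι) ℂ) : Matrix (ι × ι × ι) (ι × ι × ι) ℂ :=
  fun p q => V (p.1, p.2.2) (q.1, q.2.2) * (if p.2.1 = q.2.1 then 1 else 0)

/-- The leg `V₂₃` on `H ⊗ H ⊗ H`. -/
def leg23 (V : Matrix (ι × ι) (ι × ι) ℂ) : Matrix (ι × ι × ι) (ι × ι × ι) ℂ :=
  fun p q => V (p.2.1, p.2.2) (q.2.1, q.2.2) * (if p.1 = q.1 then 1 else 0)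

/-- The pentagon equation `V₁₂ V₁₃ V₂₃ = V₂₃ V₁₂`. -/
def Pentagon (V : Matrix (ι × ι) (ι × ι) ℂ) : Prop :=
  leg12 V * leg13 V * leg23 V = leg23 V * leg12 V

/-- `V` is a multiplicative unitary: a unitary satisfying the pentagon equation. -/
def IsMU (V : Matrix (ι × ι) (ι × ι) ℂ) : Prop :=
  V * V.conjTranspose = 1 ∧ V.conjTranspose * V = 1 ∧ Pentagon V

/-- `ξ` is a fixed vector for `V`. -/
def Fixed (V : Matrix (ι × ι) (ι × ι) ℂ) (ξ : EuclideanSpace ℂ ι) : Prop :=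
  ∀ η, mact V (tens ξ η) = tens ξ η

/-- `ξ` is a cofixed vector for `V`. -/
def Cofixed (V : Matrix (ι × ι) (ι × ι) ℂ) (ξ : EuclideanSpace ℂ ι) : Prop :=
  ∀ η, mact V (tens η ξ) = tens η ξ

/-- `V` has multiplicity 1, with fixed unit vector `e` and cofixed unit vector `eHat`. -/
def Mult1 (V : Matrix (ι × ι) (ι × ι) ℂ) (e eHat : EuclideanSpace ℂ ι) : Prop :=
  ‖e‖ = 1 ∧ ‖eHat‖ = 1 ∧ Fixed V e ∧ Cofixed V eHat ∧
    (∀ ξ, Fixed V ξ → ∃ c : ℂ, ξ = c • e) ∧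
    (∀ ξ, Cofixed V ξ → ∃ c : ℂ, ξ = c • eHat)

/-- A pre-subgroup of `V` (with fixed vector `e`): a unit vector `f` with
`⟨f,e⟩ > 0` and `V(f⊗f) = f⊗f`. -/
def IsPreSubgroup (V : Matrix (ι × ι) (ι × ι) ℂ) (e f : EuclideanSpace ℂ ι) : Prop :=
  ‖f‖ = 1 ∧ 0 < ⟪f, e⟫_ℂ ∧ mact V (tens f f) = tens f f

/-- The subspace `H^f = {η : V(f⊗η) = f⊗η}`. -/
def subUp (V : Matrix (ι × ι) (ι × ι) ℂ) (f : EuclideanSpace ℂ ι) :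
    Submodule ℂ (EuclideanSpace ℂ ι) :=
  LinearMap.ker ((mact V).comp (tensL f) - tensL f)

/-- The subspace `H_f = {η : V(η⊗f) = η⊗f}`. -/
def subDown (V : Matrix (ι × ι) (ι × ι) ℂ) (f : EuclideanSpace ℂ ι) :
    Submodule ℂ (EuclideanSpace ℂ ι) :=
  LinearMap.ker ((mact V).comp (tensR f) - tensR f)

/-- The slice `L(ω_{ξ,η}) = (ω_{ξ,η} ⊗ id)(V)`. -/
def Lslice (V : Matrix (ι × ι) (ι × ι) ℂ) (ξ η : EuclideanSpace ℂ ι) : Matrix ι ι ℂ :=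
  fun a b => ∑ x, ∑ y, (starRingEnd ℂ) (ξ x) * η y * V (x, a) (y, b)

/-- The slice `ρ(ω_{ξ,η}) = (id ⊗ ω_{ξ,η})(V)`. -/
def Rslice (V : Matrix (ι × ι) (ι × ι) ℂ) (ξ η : EuclideanSpace ℂ ι) : Matrix ι ι ℂ :=
  fun a b => ∑ x, ∑ y, (starRingEnd ℂ) (ξ x) * η y * V (a, x) (b, y)

/-- The slice `L(ω) = (ω ⊗ id)(V)` of a general linear functional `ω` on `L(H)`. -/
def LslF (V : Matrix (ι × ι) (ι × ι) ℂ) (ω : Matrix ι ι ℂ →ₗ[ℂ] ℂ) : Matrix ι ι ℂ :=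
  fun a b => ω (fun x y => V (x, a) (y, b))

/-- A state on `L(H)`: a unital positive linear functional. -/
def IsState (ω : Matrix ι ι ℂ →ₗ[ℂ] ℂ) : Prop :=
  ω 1 = 1 ∧ ∀ M : Matrix ι ι ℂ, M.PosSemidef → ∃ r : ℝ, 0 ≤ r ∧ ω M = r
open Matrix
open scoped Kronecker

section PartialTrace

variable {R m n : Type*} [CommSemiring R] [Fintype n]

def partialTraceRight (X : Matrix (m × n) (m × n) R) : Matrix m m R :=
  fun i l => ∑ j, X (i, j) (l, j)

theorem trace_partialTraceRight [Fintype m] (X : Matrix (m × n) (m × n) R) :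
    (partialTraceRight X).trace = X.trace := by
  simp [partialTraceRight, Matrix.trace, Fintype.sum_prod_type]

theorem partialTraceRight_one_kronecker_mul_comm [Fintype m] [DecidableEq m]
    (M : Matrix n n R) (X : Matrix (m × n) (m × n) R) :
    partialTraceRight ((1 ⊗ₖ M) * X) = partialTraceRight (X * (1 ⊗ₖ M)) := by
  ext i l
  simp only [partialTraceRight, mul_apply, kroneckerMap_apply, one_apply, ite_mul, one_mul,
    zero_mul, Fintype.sum_prod_type, Finset.sum_ite_irrel, Finset.sum_const_zero,
    Finset.sum_ite_eq, Finset.mem_univ, ↓reduceIte, mul_ite, mul_zero, Finset.sum_ite_eq']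
  rw [Finset.sum_comm]
  exact Finset.sum_congr rfl fun _ _ => Finset.sum_congr rfl fun _ _ => mul_comm _ _

end PartialTrace

section Isometry

variable {𝕜 E : Type*} [RCLike 𝕜] [NormedAddCommGroup E] [InnerProductSpace 𝕜 E]

theorem eq_of_norm_eq_of_re_inner_eq_norm_sq {x y : E} (hy : ‖y‖ = ‖x‖)
    (h : RCLike.re ⟪x, y⟫_𝕜 = ‖x‖ ^ 2) : y = x := by
  rw [← sub_eq_zero, ← norm_eq_zero, ← sq_eq_zero_iff (M₀ := ℝ), norm_sub_sq (𝕜 := 𝕜), hy,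
    inner_re_symm, h]
  ring

theorem forall_map_eq_of_sum_re_inner_eq {κ : Type*} (f : E → E) (hf : ∀ x, ‖f x‖ = ‖x‖)
    (s : Finset κ) (u : κ → E)
    (h : ∑ i ∈ s, RCLike.re ⟪u i, f (u i)⟫_𝕜 = ∑ i ∈ s, ‖u i‖ ^ 2) :
    ∀ i ∈ s, f (u i) = u i := by
  have hle : ∀ i ∈ s, RCLike.re ⟪u i, f (u i)⟫_𝕜 ≤ ‖u i‖ ^ 2 := fun i _ =>
    (re_inner_le_norm _ _).trans_eq (by rw [hf, sq])
  exact fun i hi =>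
    eq_of_norm_eq_of_re_inner_eq_norm_sq (hf _) ((Finset.sum_eq_sum_iff_of_le hle).1 h i hi)

end Isometry

section Mact

variable {κ : Type*} [Fintype κ]

theorem mact_eq_toLp_mulVec (M : Matrix κ κ ℂ) (v : EuclideanSpace ℂ κ) :
    mact M v = WithLp.toLp 2 (M *ᵥ v.ofLp) := rfl

theorem mact_mul (M N : Matrix κ κ ℂ) : mact (M * N) = mact M * mact N := by
  ext v : 1
  simp [mact_eq_toLp_mulVec, mulVec_mulVec]

theorem mact_smul (c : ℂ) (M : Matrix κ κ ℂ) : mact (c • M) = c • mact M := by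
  ext v : 1
  simp [mact_eq_toLp_mulVec, smul_mulVec]

variable [DecidableEq κ]

theorem mact_one : mact (1 : Matrix κ κ ℂ) = 1 := by
  ext v : 1
  simp [mact_eq_toLp_mulVec]

theorem trace_mact (M : Matrix κ κ ℂ) : LinearMap.trace ℂ _ (mact M) = M.trace :=
  M.trace_toLin_eq (EuclideanSpace.basisFun κ ℂ).toBasis

theorem norm_mact_of_mem_unitary {U : Matrix κ κ ℂ} (hU : U ∈ unitary (Matrix κ κ ℂ))
    (x : EuclideanSpace ℂ κ) : ‖mact U x‖ = ‖x‖ :=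
  ContinuousLinearMap.norm_map_of_mem_unitary
    (Unitary.map_mem (toEuclideanCLM (n := κ) (𝕜 := ℂ)) hU) x

theorem mact_conjTranspose_eq_self_iff {U : Matrix κ κ ℂ} (hU : U ∈ unitary (Matrix κ κ ℂ))
    (w : EuclideanSpace ℂ κ) : mact Uᴴ w = w ↔ mact U w = w := by
  have hUUh w : mact U (mact Uᴴ w) = w := by
    rw [← Module.End.mul_apply, ← mact_mul, ← star_eq_conjTranspose,
      Unitary.mul_star_self_of_mem hU, mact_one, Module.End.one_apply]
  have hUhU w : mact Uᴴ (mact U w) = w := by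
    rw [← Module.End.mul_apply, ← mact_mul, ← star_eq_conjTranspose,
      Unitary.star_mul_self_of_mem hU, mact_one, Module.End.one_apply]
  exact ⟨fun h => by rw [← h, hUUh, h], fun h => by rw [← h, hUhU, h]⟩

end Mact

section Legs

variable {ι : Type*} [DecidableEq ι] {V : Matrix (ι × ι) (ι × ι) ℂ}

theorem leg23_eq_one_kronecker (V : Matrix (ι × ι) (ι × ι) ℂ) : leg23 V = 1 ⊗ₖ V := by
  ext ⟨i, j, k⟩ ⟨l, m, n⟩
  simp [leg23, one_apply, mul_comm]

variable [Fintype ι]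

theorem leg23_mul_conjTranspose_self (h : V * Vᴴ = 1) : leg23 V * (leg23 V)ᴴ = 1 := by
  rw [leg23_eq_one_kronecker, conjTranspose_kronecker, ← mul_kronecker_mul, h, conjTranspose_one,
    mul_one, one_kronecker_one]

theorem leg23_conjTranspose_mul_self (h : Vᴴ * V = 1) : (leg23 V)ᴴ * leg23 V = 1 := by
  rw [leg23_eq_one_kronecker, conjTranspose_kronecker, ← mul_kronecker_mul, h, conjTranspose_one,
    one_mul, one_kronecker_one]

theorem IsMU.mem_unitary (hV : IsMU V) : V ∈ unitary (Matrix (ι × ι) (ι × ι) ℂ) :=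
  Unitary.mem_iff.2 ⟨hV.2.1, hV.1⟩

theorem IsMU.leg12_mul_leg13 (hV : IsMU V) :
    leg12 V * leg13 V = leg23 V * leg12 V * (leg23 V)ᴴ := by
  rw [← hV.2.2, mul_assoc _ (leg23 V), leg23_mul_conjTranspose_self hV.1, mul_one]

variable (V) in
theorem partialTraceRight_leg12_mul_leg13 :
    partialTraceRight (leg12 V * leg13 V) = partialTraceRight V * partialTraceRight V := by
  ext i l
  simp only [partialTraceRight, mul_apply, leg12, mul_ite, mul_one, mul_zero, leg13, ite_mul,
    zero_mul, Fintype.sum_prod_type, Finset.sum_ite_irrel, Finset.sum_ite_eq, Finset.mem_univ,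
    ↓reduceIte, Finset.sum_const_zero, Finset.sum_ite_eq', Finset.mul_sum, Finset.sum_mul]
  exact (Finset.sum_congr rfl fun _ _ => Finset.sum_comm).trans
    (Finset.sum_comm.trans (Finset.sum_congr rfl fun _ _ => Finset.sum_comm))

variable (V) in
theorem partialTraceRight_leg12 :
    partialTraceRight (leg12 V) = (Fintype.card ι : ℂ) • partialTraceRight V := by
  ext i l
  simp [partialTraceRight, leg12, Fintype.sum_prod_type, Finset.mul_sum]

theorem IsMU.partialTraceRight_mul_self (hV : IsMU V) :
    partialTraceRight V * partialTraceRight V = (Fintype.card ι : ℂ) • partialTraceRight V := by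
  rw [← partialTraceRight_leg12_mul_leg13, hV.leg12_mul_leg13, leg23_eq_one_kronecker, mul_assoc,
    partialTraceRight_one_kronecker_mul_comm, mul_assoc, ← leg23_eq_one_kronecker,
    leg23_conjTranspose_mul_self hV.2.1, mul_one, partialTraceRight_leg12]

end Legs

section Fixed

variable {ι : Type*} [Fintype ι] {V : Matrix (ι × ι) (ι × ι) ℂ} {ξ : EuclideanSpace ℂ ι}

theorem mem_iInf_subDown : ξ ∈ ⨅ η, subDown V η ↔ Fixed V ξ := by
  simp [subDown, Fixed, Submodule.mem_iInf, sub_eq_zero, tensR]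

theorem mem_iInf_subUp : ξ ∈ ⨅ η, subUp V η ↔ Cofixed V ξ := by
  simp [subUp, Cofixed, Submodule.mem_iInf, sub_eq_zero, tensL]

variable [DecidableEq ι]

theorem inner_tens_single (ξ : EuclideanSpace ℂ ι) (y : ι) (w : EuclideanSpace ℂ (ι × ι)) :
    ⟪tens ξ (EuclideanSpace.single y 1), w⟫_ℂ = ∑ a, w (a, y) * starRingEnd ℂ (ξ a) := by
  simp [PiLp.inner_apply, Fintype.sum_prod_type, tens, apply_ite, mul_comm]

theorem norm_tens_single (ξ : EuclideanSpace ℂ ι) (y : ι) :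
    ‖tens ξ (EuclideanSpace.single y 1)‖ = ‖ξ‖ := by
  simp [EuclideanSpace.norm_eq, Fintype.sum_prod_type, tens, apply_ite]

theorem mact_partialTraceRight_apply (M : Matrix (ι × ι) (ι × ι) ℂ) (ξ : EuclideanSpace ℂ ι)
    (a : ι) :
    mact (partialTraceRight M) ξ a = ∑ y, mact M (tens ξ (EuclideanSpace.single y 1)) (a, y) := by
  simp only [mact, LinearMap.coe_mk, AddHom.coe_mk, appM, partialTraceRight, Finset.sum_mul, tens,
    PiLp.single_apply, mul_ite, mul_one, mul_zero, Fintype.sum_prod_type, Finset.sum_ite_eq',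
    Finset.mem_univ, ↓reduceIte]
  exact Finset.sum_comm

theorem Fixed.mact_partialTraceRight (h : Fixed V ξ) :
    mact (partialTraceRight V) ξ = (Fintype.card ι : ℂ) • ξ := by
  ext a
  simp only [mact_partialTraceRight_apply, h _]
  simp [tens]

theorem fixed_of_forall_single
    (h : ∀ y, mact V (tens ξ (EuclideanSpace.single y 1)) = tens ξ (EuclideanSpace.single y 1)) :
    Fixed V ξ := by
  have hcomp : (mact V).comp (tensL ξ) = tensL ξ :=
    (EuclideanSpace.basisFun ι ℂ).toBasis.ext fun y => by simpa [tensL] using h y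
  exact fun η => LinearMap.congr_fun hcomp η

theorem fixed_of_mact_partialTraceRight (hV : V ∈ unitary (Matrix (ι × ι) (ι × ι) ℂ))
    (h : mact (partialTraceRight V) ξ = (Fintype.card ι : ℂ) • ξ) : Fixed V ξ := by
  have hsum : ∑ y, ⟪tens ξ (EuclideanSpace.single y 1),
      mact V (tens ξ (EuclideanSpace.single y 1))⟫_ℂ = ⟪ξ, mact (partialTraceRight V) ξ⟫_ℂ := by
    simp only [inner_tens_single]
    simp only [PiLp.inner_apply, RCLike.inner_apply, mact_partialTraceRight_apply, Finset.sum_mul]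
    exact Finset.sum_comm
  refine fixed_of_forall_single fun y => forall_map_eq_of_sum_re_inner_eq (𝕜 := ℂ) (mact V)
    (norm_mact_of_mem_unitary hV) Finset.univ (fun y => tens ξ (EuclideanSpace.single y 1)) ?_ y
    (Finset.mem_univ y)
  simp only [norm_tens_single]
  rw [← map_sum, hsum, h]
  simp [inner_self_eq_norm_sq_to_K, ← Complex.ofReal_pow]

theorem fixed_iff_mact_partialTraceRight (hV : V ∈ unitary (Matrix (ι × ι) (ι × ι) ℂ)) :
    Fixed V ξ ↔ mact (partialTraceRight V) ξ = (Fintype.card ι : ℂ) • ξ :=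
  ⟨Fixed.mact_partialTraceRight, fixed_of_mact_partialTraceRight hV⟩

theorem finrank_iInf_subDown_mul_card [Nonempty ι] (hV : IsMU V) :
    (Module.finrank ℂ ↥(⨅ η, subDown V η) : ℂ) * Fintype.card ι = V.trace := by
  set n : ℂ := (Fintype.card ι : ℂ)
  have hn : n ≠ 0 := Nat.cast_ne_zero.2 Fintype.card_ne_zero
  set A := mact (partialTraceRight V)
  have hP : IsIdempotentElem (n⁻¹ • A) := by
    rw [IsIdempotentElem, smul_mul_smul, ← mact_mul, hV.partialTraceRight_mul_self, mact_smul,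
      smul_smul, mul_assoc, inv_mul_cancel₀ hn, mul_one]
  have hrange : ⨅ η, subDown V η = LinearMap.range (n⁻¹ • A) := by
    ext ξ
    rw [mem_iInf_subDown, LinearMap.IsIdempotentElem.mem_range_iff hP, LinearMap.smul_apply,
      inv_smul_eq_iff₀ hn, fixed_iff_mact_partialTraceRight hV.mem_unitary]
  rw [hrange, ← (LinearMap.IsIdempotentElem.isProj_range _ hP).trace, map_smul, trace_mact,
    trace_partialTraceRight, smul_eq_mul]
  field_simp

end Fixed

def tripleReverse (ι : Type*) : ι × ι × ι ≃ ι × ι × ι where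
  toFun p := (p.2.2, p.2.1, p.1)
  invFun p := (p.2.2, p.2.1, p.1)
  left_inv _ := rfl
  right_inv _ := rfl

section Dual

variable {ι : Type*}

def dual (V : Matrix (ι × ι) (ι × ι) ℂ) : Matrix (ι × ι) (ι × ι) ℂ :=
  Vᴴ.submatrix (Equiv.prodComm ι ι) (Equiv.prodComm ι ι)

theorem trace_dual [Fintype ι] (V : Matrix (ι × ι) (ι × ι) ℂ) :
    (dual V).trace = star V.trace := by
  rw [← trace_conjTranspose, dual, Matrix.trace, Matrix.trace]
  exact Equiv.sum_comp (Equiv.prodComm ι ι) fun p => Vᴴ p p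

theorem mact_dual_tens_apply [Fintype ι] (V : Matrix (ι × ι) (ι × ι) ℂ)
    (ξ η : EuclideanSpace ℂ ι) (a b : ι) :
    mact (dual V) (tens ξ η) (a, b) = mact Vᴴ (tens η ξ) (b, a) := by
  simp only [mact_eq_toLp_mulVec, dual, submatrix_mulVec_equiv]
  have hswap : (tens ξ η).ofLp ∘ (Equiv.prodComm ι ι).symm = (tens η ξ).ofLp :=
    funext fun _ => mul_comm _ _
  rw [hswap]
  rfl

variable [DecidableEq ι]

theorem leg12_dual (V : Matrix (ι × ι) (ι × ι) ℂ) :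
    leg12 (dual V) = (leg23 V)ᴴ.submatrix (tripleReverse ι) (tripleReverse ι) := by
  ext ⟨a, b, c⟩ ⟨a', b', c'⟩
  by_cases h : c = c'
  · subst h; simp [leg12, leg23, dual, tripleReverse]
  · simp [leg12, leg23, dual, tripleReverse, h, Ne.symm h]

theorem leg13_dual (V : Matrix (ι × ι) (ι × ι) ℂ) :
    leg13 (dual V) = (leg13 V)ᴴ.submatrix (tripleReverse ι) (tripleReverse ι) := by
  ext ⟨a, b, c⟩ ⟨a', b', c'⟩
  by_cases h : b = b'
  · subst h; simp [leg13, dual, tripleReverse]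
  · simp [leg13, dual, tripleReverse, h, Ne.symm h]

theorem leg23_dual (V : Matrix (ι × ι) (ι × ι) ℂ) :
    leg23 (dual V) = (leg12 V)ᴴ.submatrix (tripleReverse ι) (tripleReverse ι) := by
  ext ⟨a, b, c⟩ ⟨a', b', c'⟩
  by_cases h : a = a'
  · subst h; simp [leg12, leg23, dual, tripleReverse]
  · simp [leg12, leg23, dual, tripleReverse, h, Ne.symm h]

variable [Fintype ι] {V : Matrix (ι × ι) (ι × ι) ℂ}

theorem IsMU.dual (hV : IsMU V) : IsMU (dual V) := by
  obtain ⟨hVVh, hVhV, hpent⟩ := hV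
  refine ⟨?_, ?_, ?_⟩
  · rw [MU.dual, conjTranspose_submatrix, conjTranspose_conjTranspose, submatrix_mul_equiv, hVhV,
      submatrix_one_equiv]
  · rw [MU.dual, conjTranspose_submatrix, conjTranspose_conjTranspose, submatrix_mul_equiv, hVVh,
      submatrix_one_equiv]
  · rw [Pentagon, leg12_dual, leg13_dual, leg23_dual, submatrix_mul_equiv, submatrix_mul_equiv,
      submatrix_mul_equiv, ← conjTranspose_mul, ← conjTranspose_mul, ← conjTranspose_mul,
      ← mul_assoc, hpent, conjTranspose_mul]

theorem fixed_dual_iff_cofixed (hV : V ∈ unitary (Matrix (ι × ι) (ι × ι) ℂ))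
    (ξ : EuclideanSpace ℂ ι) : Fixed (dual V) ξ ↔ Cofixed V ξ := by
  have hswap η : mact (dual V) (tens ξ η) = tens ξ η ↔ mact Vᴴ (tens η ξ) = tens η ξ := by
    simp only [WithLp.ext_iff, funext_iff, Prod.forall, mact_dual_tens_apply]
    rw [forall_comm]
    simp [tens, mul_comm]
  simp only [Fixed, Cofixed, hswap, mact_conjTranspose_eq_self_iff hV]

end Dual

/-- the space of fixed vectors and the space of cofixed vectors of a
multiplicative unitary on a finite-dimensional Hilbert space have equal dimension. -/
theorem fixed_dim_eq_cofixed_dim {ι : Type*} [Fintype ι] [DecidableEq ι] [Nonempty ι]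
    (V : Matrix (ι × ι) (ι × ι) ℂ) (hV : IsMU V) :
    Module.finrank ℂ ↥(⨅ η : EuclideanSpace ℂ ι,
        LinearMap.ker ((mact V).comp (tensR η) - tensR η)) =
    Module.finrank ℂ ↥(⨅ η : EuclideanSpace ℂ ι,
        LinearMap.ker ((mact V).comp (tensL η) - tensL η)) := by
  change Module.finrank ℂ ↥(⨅ η, subDown V η) = Module.finrank ℂ ↥(⨅ η, subUp V η)
  have hcofixed : ⨅ η, subUp V η = ⨅ η, subDown (dual V) η := by
    ext ξ
    rw [mem_iInf_subUp, mem_iInf_subDown, fixed_dual_iff_cofixed hV.mem_unitary]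
  have hdual := finrank_iInf_subDown_mul_card hV.dual
  rw [← hcofixed, trace_dual, ← finrank_iInf_subDown_mul_card hV, star_mul', star_natCast,
    star_natCast] at hdual
  have hn : (Fintype.card ι : ℂ) ≠ 0 := Nat.cast_ne_zero.2 Fintype.card_ne_zero
  exact_mod_cast (mul_right_cancel₀ hn hdual).symm

end MU
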